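/- arXiv:2506.13911 — 3 statements merged into one kernel-verified Lean document; each statement's English description precedes it below -/
import Mathlib

section
/- For every rooted graph (G,v) with node set V: (1) tree-width(G) − 1 ≤ ego-rank(G,v) ≤ |V|; (2) ego-rank(G,v) = 0 if and only if G is acyclic; (3) ego-rank(G,v) ≤ 1 whenever (G,v) is c-acyclic (and hence ego-rank(G,v) = 1 if (G,v) is c-acyclic and G has a cycle). -/
open Classical

/-! ### Graphs with `p` binary node features -/

/-- A finite undirected graph with node labels over `p` binary features. -/
structure LGraph (p : ℕ) : Type 1 where
  V : Type
  fintypeV : Fintype V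
  decEqV : DecidableEq V
  adj : V → V → Prop
  symm : ∀ {u v}, adj u v → adj v u
  irrefl : ∀ v, ¬ adj v v
  lab : V → Fin p → Prop

attribute [instance] LGraph.fintypeV LGraph.decEqV

namespace LGraph

variable {p : ℕ}

/-- The finset of neighbours of a node. -/
noncomputable def nbrFinset (G : LGraph p) (v : G.V) : Finset G.V :=
  Finset.univ.filter (fun u => G.adj v u)

/-- Multi-hot label encoding. -/
noncomputable def embG (G : LGraph p) (v : G.V) : Fin p → ℝ :=
  fun i => if G.lab v i then 1 else 0

/-- `G.within v r u` : node `u` is at distance at most `r` from `v`. -/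
def within (G : LGraph p) (v : G.V) : ℕ → G.V → Prop
  | 0 => fun u => u = v
  | (r+1) => fun u => G.within v r u ∨ ∃ w, G.within v r w ∧ G.adj w u

theorem within_self (G : LGraph p) (v : G.V) : ∀ r, G.within v r v
  | 0 => rfl
  | (r+1) => Or.inl (G.within_self v r)

/-- Induced subgraph on a set of nodes. -/
noncomputable def induce (G : LGraph p) (S : Set G.V) : LGraph p where
  V := {u // u ∈ S}
  fintypeV := Fintype.ofFinite _
  decEqV := inferInstance
  adj a b := G.adj a.1 b.1
  symm h := G.symm h
  irrefl a h := G.irrefl a.1 h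
  lab a := G.lab a.1

/-- `G_v^r` : the induced subgraph on the radius-`r` neighbourhood of `v`. -/
noncomputable def ball (G : LGraph p) (v : G.V) (r : ℕ) : LGraph p :=
  G.induce {u | G.within v r u}

/-- The centre of `G_v^r`, as a node of `G_v^r`. -/
noncomputable def ballCenter (G : LGraph p) (v : G.V) (r : ℕ) : (G.ball v r).V :=
  ⟨v, G.within_self v r⟩

end LGraph

/-! ### GNNs -/

/-- A single message-passing layer: aggregation over the multiset of neighbour
embeddings and combination of the node embedding (concatenated via `Fin.append`)
with the aggregated value. -/
structure GNNLayer (Din Dout : ℕ) : Type where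
  agg : Multiset (Fin Din → ℝ) → (Fin Din → ℝ)
  com : (Fin (Din + Din) → ℝ) → (Fin Dout → ℝ)

/-- A `(D,D')`-GNN: a nonempty sequence of layers with matching dimensions. -/
inductive GNN : ℕ → ℕ → Type
  | last {D D'} (l : GNNLayer D D') : GNN D D'
  | cons {D Dm D'} (l : GNNLayer D Dm) (rest : GNN Dm D') : GNN D D'

noncomputable def GNNLayer.apply {p Din Dout : ℕ} (l : GNNLayer Din Dout) (G : LGraph p)
    (emb : G.V → Fin Din → ℝ) : G.V → Fin Dout → ℝ :=
  fun v => l.com (Fin.append (emb v) (l.agg ((G.nbrFinset v).val.map emb)))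

/-- Running a GNN on an embedded graph. -/
noncomputable def GNN.run {p : ℕ} : {D D' : ℕ} → GNN D D' → (G : LGraph p) →
    (G.V → Fin D → ℝ) → (G.V → Fin D' → ℝ)
  | _, _, .last l, G, emb => l.apply G emb
  | _, _, .cons l rest, G, emb => rest.run G (l.apply G emb)

/-- The node classifier of a `(p,1)`-GNN (as a proposition: value `1` ↔ output `> 0`). -/
def GNN.clsP {p : ℕ} (A : GNN p 1) (G : LGraph p) (v : G.V) : Prop :=
  0 < A.run G G.embG v 0

/-- The node classifier of a `(p,1)`-GNN, as a boolean value. -/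
noncomputable def GNN.cls {p : ℕ} (A : GNN p 1) (G : LGraph p) (v : G.V) : Bool :=
  if A.clsP G v then true else false

/-! ### Hierarchical Ego GNNs -/

/-- A `(D,D')`-HE-GNN of nesting depth `d`. -/
inductive HEGNN : ℕ → ℕ → ℕ → Type
  | base {D D'} (A : GNN D D') : HEGNN 0 D D'
  | nest {d D D'' D'} (B : HEGNN d (D+1) D'') (C : GNN (D + D'') D') : HEGNN (d+1) D D'

noncomputable def HEGNN.run {p : ℕ} : {d D D' : ℕ} → HEGNN d D D' → (G : LGraph p) →
    (G.V → Fin D → ℝ) → (G.V → Fin D' → ℝ)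
  | _, _, _, .base A, G, emb => A.run G emb
  | _, _, _, .nest B C, G, emb =>
      C.run G (fun v => Fin.append (emb v)
        (B.run G (fun u => Fin.append (emb u) (fun _ => if u = v then (1:ℝ) else 0)) v))

def HEGNN.clsP {p d : ℕ} (A : HEGNN d p 1) (G : LGraph p) (v : G.V) : Prop :=
  0 < A.run G G.embG v 0

noncomputable def HEGNN.cls {p d : ℕ} (A : HEGNN d p 1) (G : LGraph p) (v : G.V) : Bool :=
  if A.clsP G v then true else false

/-! ### Hierarchical Ego Subgraph GNNs -/

/-- A `(D,D')`-HES-GNN of depth `d`; each nesting step carries its own radius `r`. -/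
inductive HESGNN : ℕ → ℕ → ℕ → Type
  | base {D D'} (A : GNN D D') : HESGNN 0 D D'
  | nest {d D D'' D'} (r : ℕ) (B : HESGNN d (D+1) D'') (C : GNN (D + D'') D') :
      HESGNN (d+1) D D'

noncomputable def HESGNN.run {p : ℕ} : {d D D' : ℕ} → HESGNN d D D' → (G : LGraph p) →
    (G.V → Fin D → ℝ) → (G.V → Fin D' → ℝ)
  | _, _, _, .base A, G, emb => A.run G emb
  | _, _, _, .nest r B C, G, emb =>
      C.run G (fun v => Fin.append (emb v)
        (B.run (G.ball v r)
          (fun u => Fin.append (emb u.1) (fun _ => if u.1 = v then (1:ℝ) else 0))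
          (G.ballCenter v r)))

/-- All subgraph restrictions in the HES-GNN use radius `r`. -/
def HESGNN.radIs : {d D D' : ℕ} → ℕ → HESGNN d D D' → Prop
  | _, _, _, _, .base _ => True
  | _, _, _, r, .nest r' B _ => r' = r ∧ B.radIs r

def HESGNN.clsP {p d : ℕ} (A : HESGNN d p 1) (G : LGraph p) (v : G.V) : Prop :=
  0 < A.run G G.embG v 0

noncomputable def HESGNN.cls {p d : ℕ} (A : HESGNN d p 1) (G : LGraph p) (v : G.V) : Bool :=
  if A.clsP G v then true else false
/-! ### Graded modal logic GML -/

inductive GML (p : ℕ) : Type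
  | prop (i : Fin p)
  | top
  | and (φ ψ : GML p)
  | not (φ : GML p)
  | dia (k : ℕ) (φ : GML p)

/-- Satisfaction of a GML formula at a node. -/
def GML.sat {p : ℕ} (G : LGraph p) : GML p → G.V → Prop
  | .prop i, v => G.lab v i
  | .top, _ => True
  | .and φ ψ, v => φ.sat G v ∧ ψ.sat G v
  | .not φ, v => ¬ φ.sat G v
  | .dia k φ, v => k ≤ Nat.card {u : G.V // G.adj v u ∧ φ.sat G u}

/-! ### Graded hybrid logic GML(↓) -/

inductive GMLd (p : ℕ) : Type
  | prop (i : Fin p)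
  | var (x : ℕ)
  | top
  | and (φ ψ : GMLd p)
  | not (φ : GMLd p)
  | dia (k : ℕ) (φ : GMLd p)
  | bind (x : ℕ) (φ : GMLd p)

/-- Satisfaction of a GML(↓) formula at a node, relative to an assignment of
variables to (marked) nodes; `↓x.φ` marks the current node with `x`. -/
def GMLd.sat {p : ℕ} (G : LGraph p) : GMLd p → (ℕ → Option G.V) → G.V → Prop
  | .prop i, _, v => G.lab v i
  | .var x, g, v => g x = some v
  | .top, _, _ => True
  | .and φ ψ, g, v => φ.sat G g v ∧ ψ.sat G g v
  | .not φ, g, v => ¬ φ.sat G g v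
  | .dia k φ, g, v => k ≤ Nat.card {u : G.V // G.adj v u ∧ φ.sat G g u}
  | .bind x φ, g, v => φ.sat G (Function.update g x (some v)) v

def GMLd.free {p : ℕ} : GMLd p → Set ℕ
  | .prop _ => ∅
  | .var x => {x}
  | .top => ∅
  | .and φ ψ => φ.free ∪ ψ.free
  | .not φ => φ.free
  | .dia _ φ => φ.free
  | .bind x φ => φ.free \ {x}

/-- A sentence has no free variables. -/
def GMLd.Sentence {p : ℕ} (φ : GMLd p) : Prop := φ.free = ∅

/-- The ↓-nesting-depth of a formula. -/
def GMLd.bindDepth {p : ℕ} : GMLd p → ℕ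
  | .prop _ => 0
  | .var _ => 0
  | .top => 0
  | .and φ ψ => max φ.bindDepth ψ.bindDepth
  | .not φ => φ.bindDepth
  | .dia _ φ => φ.bindDepth
  | .bind _ φ => φ.bindDepth + 1

/-- Satisfaction of a sentence (empty assignment). -/
def GMLd.satS {p : ℕ} (G : LGraph p) (φ : GMLd p) (v : G.V) : Prop :=
  φ.sat G (fun _ => none) v

/-! ### Graded hybrid subgraph logic: the fragment GML(↓_W) -/

inductive GMLW (p : ℕ) : Type
  | prop (i : Fin p)
  | var (x : ℕ)
  | top
  | and (φ ψ : GMLW p)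
  | not (φ : GMLW p)
  | dia (k : ℕ) (φ : GMLW p)
  /-- `↓_{W^r} x. φ`, i.e. `↓x. W^r φ`. -/
  | bindW (x : ℕ) (r : ℕ) (φ : GMLW p)

/-- Restrict an assignment along passage to an induced subgraph: markings of
nodes outside the subgraph disappear. -/
noncomputable def restrictAssign {p : ℕ} {G : LGraph p} (S : Set G.V)
    (g : ℕ → Option G.V) : ℕ → Option (G.induce S).V :=
  fun x => (g x).bind (fun w => if h : w ∈ S then some ⟨w, h⟩ else none)

/-- Satisfaction for the fragment GML(↓_W): `↓x.W^r φ` marks the current node `v`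
with `x` and evaluates `φ` in the subgraph `G_v^r`. -/
noncomputable def GMLW.sat {p : ℕ} : GMLW p → (G : LGraph p) → (ℕ → Option G.V) → G.V → Prop
  | .prop i, G, _, v => G.lab v i
  | .var x, _, g, v => g x = some v
  | .top, _, _, _ => True
  | .and φ ψ, G, g, v => φ.sat G g v ∧ ψ.sat G g v
  | .not φ, G, g, v => ¬ φ.sat G g v
  | .dia k φ, G, g, v => k ≤ Nat.card {u : G.V // G.adj v u ∧ φ.sat G g u}
  | .bindW x r φ, G, g, v =>
      φ.sat (G.ball v r) (restrictAssign _ (Function.update g x (some v))) (G.ballCenter v r)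

def GMLW.free {p : ℕ} : GMLW p → Set ℕ
  | .prop _ => ∅
  | .var x => {x}
  | .top => ∅
  | .and φ ψ => φ.free ∪ ψ.free
  | .not φ => φ.free
  | .dia _ φ => φ.free
  | .bindW x _ φ => φ.free \ {x}

def GMLW.Sentence {p : ℕ} (φ : GMLW p) : Prop := φ.free = ∅

/-- The nesting depth of `↓_{W^r}` operators. -/
def GMLW.bindDepth {p : ℕ} : GMLW p → ℕ
  | .prop _ => 0
  | .var _ => 0
  | .top => 0
  | .and φ ψ => max φ.bindDepth ψ.bindDepth
  | .not φ => φ.bindDepth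
  | .dia _ φ => φ.bindDepth
  | .bindW _ _ φ => φ.bindDepth + 1

/-- All `↓_{W}` operators in the formula use radius `r`. -/
def GMLW.radIs {p : ℕ} (r : ℕ) : GMLW p → Prop
  | .prop _ => True
  | .var _ => True
  | .top => True
  | .and φ ψ => φ.radIs r ∧ ψ.radIs r
  | .not φ => φ.radIs r
  | .dia _ φ => φ.radIs r
  | .bindW _ r' φ => r' = r ∧ φ.radIs r

noncomputable def GMLW.satS {p : ℕ} (G : LGraph p) (φ : GMLW p) (v : G.V) : Prop :=
  φ.sat G (fun _ => none) v
/-! ### Weisfeiler–Leman and Individualization-Refinement -/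

/-- An (ordered) space of colors together with a perfect (injective) hash
function whose domains are: node labelings (initial colors), pairs of a color
and a multiset of colors (refinement), and pairs of a color and a marking
(individualization). -/
structure HashSetup (p : ℕ) : Type 1 where
  C : Type
  linC : LinearOrder C
  hInit : (Fin p → Prop) → C
  hRefine : C → Multiset C → C
  hIndiv : C → Prop → C
  inj : Function.Injective
    (Sum.elim hInit (Sum.elim (fun y : C × Multiset C => hRefine y.1 y.2)
      (fun y : C × Prop => hIndiv y.1 y.2)))

/-- A coloring is discrete if all color classes are singletons. -/
def Discrete {V C : Type} (col : V → C) : Prop :=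
  ∀ u w, col u = col w → u = w

/-- One round of color refinement. -/
noncomputable def wlStep {p : ℕ} (H : HashSetup p) (G : LGraph p)
    (col : G.V → H.C) : G.V → H.C :=
  fun v => H.hRefine (col v) ((G.nbrFinset v).val.map col)

/-- `wlIter H G d col` = `WL(G, col, d)`. -/
noncomputable def wlIter {p : ℕ} (H : HashSetup p) (G : LGraph p) :
    ℕ → (G.V → H.C) → (G.V → H.C)
  | 0, col => col
  | (d+1), col => wlStep H G (wlIter H G d col)

/-- The initial coloring `col_G`. -/
noncomputable def initCol {p : ℕ} (H : HashSetup p) (G : LGraph p) : G.V → H.C :=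
  fun v => H.hInit (G.lab v)

/-- Rose trees labeled by multisets of colors.  (Children are kept in a list;
the isomorphism relation below disregards their order.) -/
inductive CTree (C : Type) : Type
  | node (label : Multiset C) (children : List (CTree C))

/-- Isomorphism of trees whose nodes are labeled by multisets of colors. -/
inductive CTree.Iso {C : Type} : CTree C → CTree C → Prop
  | node {l : Multiset C} {cs1 cs2 : List (CTree C)}
      (e : Fin cs1.length ≃ Fin cs2.length)
      (h : ∀ i : Fin cs1.length, CTree.Iso (cs1.get i) (cs2.get (e i))) :
      CTree.Iso (.node l cs1) (.node l cs2)

/-- The multiset of all colors of a coloring. -/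
noncomputable def colMultiset {p : ℕ} (H : HashSetup p) (G : LGraph p)
    (col : G.V → H.C) : Multiset H.C :=
  Finset.univ.val.map col

/-- `WLIR H G d col` = the IR tree `WL-IR(G, col, d)` with at most `d`
individualization steps, with colorings recorded by their color multisets. -/
noncomputable def WLIR {p : ℕ} (H : HashSetup p) (G : LGraph p) :
    ℕ → (G.V → H.C) → CTree H.C
  | 0, col => .node (colMultiset H G (wlIter H G (Fintype.card G.V) col)) []
  | (d+1), col =>
    let col' := wlIter H G (Fintype.card G.V) col
    if hdisc : Discrete col' then .node (colMultiset H G col') []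
    else
      letI := H.linC
      let bigs : Finset H.C := (Finset.univ.image col').filter
        (fun c => 1 < (Finset.univ.filter (fun v => col' v = c)).card)
      have hne : bigs.Nonempty := by
        simp only [Discrete, not_forall] at hdisc
        obtain ⟨u, w, hc, hne'⟩ := hdisc
        refine ⟨col' u, Finset.mem_filter.mpr
          ⟨Finset.mem_image_of_mem _ (Finset.mem_univ u), ?_⟩⟩
        exact Finset.one_lt_card.mpr
          ⟨u, by simp, w, by simp [hc.symm], hne'⟩
      let c := bigs.min' hne
      .node (colMultiset H G col')
        (((Finset.univ.filter (fun v => col' v = c)).toList).map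
          (fun vi => WLIR H G d (fun v => H.hIndiv (col' v) (v = vi))))

/-- `G ≡_{WL-IR-d} G'` : the IR trees with `d` individualization steps are
isomorphic. -/
noncomputable def WLIRequiv {p : ℕ} (H : HashSetup p) (G G' : LGraph p) (d : ℕ) : Prop :=
  CTree.Iso (WLIR H G d (initCol H G)) (WLIR H G' d (initCol H G'))

/-- Isomorphism of labeled graphs. -/
def LGraph.Iso {p : ℕ} (G G' : LGraph p) : Prop :=
  ∃ f : G.V ≃ G'.V, (∀ u v, G.adj u v ↔ G'.adj (f u) (f v)) ∧
    ∀ v i, G.lab v i ↔ G'.lab (f v) i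
/-! ### The k-dimensional Weisfeiler–Leman test -/

/-- The type of `k`-WL colors after `i` refinement rounds (shared between all
graphs, so colors of different graphs are directly comparable). -/
def KColor (p k : ℕ) : ℕ → Type
  | 0 => ((Fin k → Fin k → Prop) × (Fin k → Fin k → Prop) × (Fin k → Fin p → Prop))
  | (i+1) => KColor p k i × (Fin k → Multiset (KColor p k i))

/-- The `k`-WL coloring of `k`-tuples after `i` rounds: the initial color is the
isomorphism type of the tuple (equalities, adjacencies, labels); each round
refines by, for each position, the multiset of colors of all one-point
modifications of the tuple. -/
noncomputable def kwl (p k : ℕ) (G : LGraph p) :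
    (i : ℕ) → (Fin k → G.V) → KColor p k i
  | 0, t => (fun i j => t i = t j, fun i j => G.adj (t i) (t j), fun i a => G.lab (t i) a)
  | (i+1), t => (kwl p k G i t,
      fun j => Finset.univ.val.map (fun w => kwl p k G i (Function.update t j w)))

/-- `(G,v)` and `(G',v')` are *not* distinguished by the `k`-dimensional WL test:
the colors of the constant tuples `(v,…,v)` and `(v',…,v')` agree at every round
(equivalently, the stable colors agree). -/
noncomputable def kwlEquiv (p k : ℕ) (G : LGraph p) (v : G.V) (G' : LGraph p) (v' : G'.V) : Prop :=
  ∀ i : ℕ, kwl p k G i (fun _ => v) = kwl p k G' i (fun _ => v')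
/-! ### Rooted graphs, homomorphism counts, Sum/ReLU-FFNN GNNs, degree bounds -/

namespace LGraph
variable {p : ℕ}

/-- `(F,u)` is a rooted graph: every node is reachable from `u`. -/
def Rooted (F : LGraph p) (u : F.V) : Prop := ∀ w, ∃ r, F.within u r w

/-- Every node of `G` has degree at most `N`. -/
def degLe (G : LGraph p) (N : ℕ) : Prop := ∀ v, Nat.card {u : G.V // G.adj v u} ≤ N

end LGraph

/-- The number of homomorphisms from the pointed graph `(F,u)` to `(G,v)`:
maps sending the root to `v`, preserving edges, and preserving labels. -/
noncomputable def homCount {p : ℕ} (F G : LGraph p) (u : F.V) (v : G.V) : ℕ :=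
  Nat.card {h : F.V → G.V //
    h u = v ∧ (∀ ⦃w w'⦄, F.adj w w' → G.adj (h w) (h w')) ∧
    ∀ w i, F.lab w i → G.lab (h w) i}

/-- Pointwise sum aggregation. -/
def sumAgg (D : ℕ) : Multiset (Fin D → ℝ) → (Fin D → ℝ) :=
  fun M i => (M.map (fun x => x i)).sum

/-- ReLU feed-forward neural networks: compositions of affine maps and
coordinatewise ReLU. -/
inductive IsReLUFFNN : {n m : ℕ} → ((Fin n → ℝ) → (Fin m → ℝ)) → Prop
  | affine {n m : ℕ} (W : Matrix (Fin m) (Fin n) ℝ) (b : Fin m → ℝ) :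
      IsReLUFFNN (fun x => W.mulVec x + b)
  | relu {n : ℕ} : IsReLUFFNN (fun (x : Fin n → ℝ) i => max 0 (x i))
  | comp {n m k : ℕ} {f : (Fin n → ℝ) → (Fin m → ℝ)} {g : (Fin m → ℝ) → (Fin k → ℝ)} :
      IsReLUFFNN f → IsReLUFFNN g → IsReLUFFNN (fun x => g (f x))

/-- A layer uses Sum aggregation and a ReLU-FFNN combination function. -/
def GNNLayer.SumReLU {Din Dout : ℕ} (l : GNNLayer Din Dout) : Prop :=
  l.agg = sumAgg Din ∧ IsReLUFFNN l.com

def GNN.SumReLU : {D D' : ℕ} → GNN D D' → Prop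
  | _, _, .last l => l.SumReLU
  | _, _, .cons l rest => l.SumReLU ∧ rest.SumReLU

def HEGNN.SumReLU : {d D D' : ℕ} → HEGNN d D D' → Prop
  | _, _, _, .base A => A.SumReLU
  | _, _, _, .nest B C => B.SumReLU ∧ C.SumReLU
/-! ### Cycles, acyclicity, ego-rank, tree-width -/

namespace LGraph
variable {p : ℕ}

/-- There is a cycle (length ≥ 3, distinct nodes, consecutive nodes adjacent,
cyclically) all of whose nodes lie in `S`. -/
def CycleIn (G : LGraph p) (S : Set G.V) : Prop :=
  ∃ (n : ℕ) (c : Fin n → G.V), 3 ≤ n ∧ Function.Injective c ∧ (∀ i, c i ∈ S) ∧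
    ∀ i : Fin n, G.adj (c i) (c ⟨(i.val + 1) % n, Nat.mod_lt _ i.pos⟩)

/-- `G` is acyclic. -/
def Acyclic (G : LGraph p) : Prop := ¬ G.CycleIn Set.univ

/-- `(G,v)` is c-acyclic: every cycle of `G` passes through `v`. -/
def CAcyclic (G : LGraph p) (v : G.V) : Prop :=
  ∀ (n : ℕ) (c : Fin n → G.V), 3 ≤ n → Function.Injective c →
    (∀ i : Fin n, G.adj (c i) (c ⟨(i.val + 1) % n, Nat.mod_lt _ i.pos⟩)) →
    ∃ i, c i = v

/-- Reachability inside a set `S` (paths are required to stay in `S`). -/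
inductive ReachIn (G : LGraph p) (S : Set G.V) : G.V → G.V → Prop
  | refl {a} (ha : a ∈ S) : ReachIn G S a a
  | tail {a b c} : ReachIn G S a b → G.adj b c → c ∈ S → ReachIn G S a c

/-- The set `S` induces a connected subgraph. -/
def ConnectedIn (G : LGraph p) (S : Set G.V) : Prop :=
  ∀ a ∈ S, ∀ b ∈ S, G.ReachIn S a b

/-- `G` is connected. -/
def Connected (G : LGraph p) : Prop := ∀ a b : G.V, ∃ r, G.within a r b

end LGraph

/-! #### Ego-rank -/

/-- Transitive closure of a partial map `dep` (so `DepCl dep w x` means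
`x ∈ deps(w) = {dep(w), dep(dep(w)), …} \ {⊥}`). -/
inductive DepCl {V : Type} (dep : V → Option V) : V → V → Prop
  | base {w x} : dep w = some x → DepCl dep w x
  | step {w x y} : DepCl dep w x → dep x = some y → DepCl dep w y

/-- `deps(w)` as a set. -/
def deps {V : Type} (dep : V → Option V) (w : V) : Set V := {x | DepCl dep w x}

/-- `dep` is a dependency function for the rooted graph `(G,v)`. -/
def IsDepFun {p : ℕ} (G : LGraph p) (v : G.V) (dep : G.V → Option G.V) : Prop :=
  dep v = none ∧
  (∀ {w u}, G.adj w u → dep w = dep u ∨ w ∈ deps dep u ∨ u ∈ deps dep w) ∧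
  (∀ o : Option G.V, ¬ G.CycleIn {w | dep w = o})

/-- The node rank of a node: `|deps(w)|`. -/
noncomputable def nodeRank {V : Type} (dep : V → Option V) (w : V) : ℕ :=
  Nat.card {x // DepCl dep w x}

/-- Ego-rank: the smallest achievable maximum node rank over all dependency
functions. -/
noncomputable def egoRank {p : ℕ} (G : LGraph p) (v : G.V) : ℕ :=
  sInf {k | ∃ dep, IsDepFun G v dep ∧ ∀ w, nodeRank dep w ≤ k}

/-! #### Tree decompositions and tree-width -/

/-- A tree decomposition of `G`: a (connected, acyclic) tree `T` with bags
covering all nodes and edges, such that each node's bags form a connected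
subtree. -/
structure TreeDecomp (p : ℕ) (G : LGraph p) : Type 1 where
  T : LGraph 0
  conn : T.Connected
  acyc : T.Acyclic
  bag : T.V → Set G.V
  cover_v : ∀ u : G.V, ∃ t, u ∈ bag t
  cover_e : ∀ {u w : G.V}, G.adj u w → ∃ t, u ∈ bag t ∧ w ∈ bag t
  subtree : ∀ u : G.V, T.ConnectedIn {t | u ∈ bag t}

/-- Tree-width: minimum over tree decompositions of (maximum bag size − 1). -/
noncomputable def treewidth {p : ℕ} (G : LGraph p) : ℕ :=
  sInf {w | ∃ D : TreeDecomp p G, ∀ t, Nat.card (D.bag t) ≤ w + 1}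
/-! ### Special graphs: cycles, disjoint unions, grids (all labels empty) -/

/-- The cycle graph `C_n` (for `n ≥ 3`), with empty node labels. -/
def cycleGraph (p n : ℕ) : LGraph p where
  V := Fin n
  fintypeV := inferInstance
  decEqV := inferInstance
  adj i j := i ≠ j ∧ ((i.val + 1) % n = j.val ∨ (j.val + 1) % n = i.val)
  symm h := ⟨h.1.symm, h.2.symm⟩
  irrefl _ h := h.1 rfl
  lab _ _ := False

/-- Disjoint union of two graphs. -/
def LGraph.disjUnion {p : ℕ} (G1 G2 : LGraph p) : LGraph p where
  V := G1.V ⊕ G2.V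
  fintypeV := inferInstance
  decEqV := inferInstance
  adj a b :=
    match a, b with
    | .inl x, .inl y => G1.adj x y
    | .inr x, .inr y => G2.adj x y
    | _, _ => False
  symm {a b} h := by
    cases a <;> cases b <;> simp_all <;> first | exact G1.symm h | exact G2.symm h
  irrefl a h := by
    cases a
    · exact G1.irrefl _ h
    · exact G2.irrefl _ h
  lab a i :=
    match a with
    | .inl x => G1.lab x i
    | .inr x => G2.lab x i

/-- The `n × 2` grid graph, with empty node labels. -/
def gridGraph (p n : ℕ) : LGraph p where
  V := Fin n × Fin 2
  fintypeV := inferInstance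
  decEqV := inferInstance
  adj a b := (a.2 = b.2 ∧ (a.1.val + 1 = b.1.val ∨ b.1.val + 1 = a.1.val)) ∨
    (a.1 = b.1 ∧ a.2 ≠ b.2)
  symm h := by
    rcases h with ⟨h1, h2⟩ | ⟨h1, h2⟩
    · exact Or.inl ⟨h1.symm, h2.symm⟩
    · exact Or.inr ⟨h1.symm, h2.symm⟩
  irrefl a h := by
    rcases h with ⟨_, h2 | h2⟩ | ⟨_, h2⟩
    · omega
    · omega
    · exact h2 rfl
  lab _ _ := False
/-! ### The witness graphs of Rattan–Seppelt: a central 4-cycle with attached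
triangles and 6-cycles. -/

/-- Vertex type: 4 square nodes, 4 triangles (3 nodes each), 4 hexagons
(6 nodes each). -/
abbrev RSV : Type := Fin 4 ⊕ (Fin 4 × Fin 3) ⊕ (Fin 4 × Fin 6)

/-- Adjacency, parameterized by the owner (square corner) of each triangle and
of each hexagon: the square is a 4-cycle; each triangle/hexagon is complete to
its owner; triangles are 3-cycles, hexagons are 6-cycles. -/
def rsAdj (tO hO : Fin 4 → Fin 4) : RSV → RSV → Prop
  | .inl a, .inl b => a ≠ b ∧ ((a.val + 1) % 4 = b.val ∨ (b.val + 1) % 4 = a.val)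
  | .inl a, .inr (.inl (t, _)) => a = tO t
  | .inr (.inl (t, _)), .inl a => a = tO t
  | .inl a, .inr (.inr (s, _)) => a = hO s
  | .inr (.inr (s, _)), .inl a => a = hO s
  | .inr (.inl (t, i)), .inr (.inl (t', i')) => t = t' ∧ i ≠ i'
  | .inr (.inr (s, j)), .inr (.inr (s', j')) =>
      s = s' ∧ ((j.val + 1) % 6 = j'.val ∨ (j'.val + 1) % 6 = j.val)
  | _, _ => False

def rsGraph (p : ℕ) (tO hO : Fin 4 → Fin 4) : LGraph p where
  V := RSV
  fintypeV := inferInstance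
  decEqV := inferInstance
  adj := rsAdj tO hO
  symm {u v} h := by
    rcases u with a | ⟨t, i⟩ | ⟨s, j⟩ <;> rcases v with b | ⟨t', i'⟩ | ⟨s', j'⟩ <;>
      simp only [rsAdj] at h ⊢ <;> tauto
  irrefl u h := by
    rcases u with a | ⟨t, i⟩ | ⟨s, j⟩ <;> simp only [rsAdj] at h <;> omega
  lab _ _ := False

/-- `G`: triangles attached to `u₁` (index 0) and `u₄` (index 3), hexagons to
`u₂` (index 1) and `u₃` (index 2). -/
def rsG (p : ℕ) : LGraph p :=
  rsGraph p (fun t => if t.val < 2 then 0 else 3) (fun s => if s.val < 2 then 1 else 2)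

/-- `G'`: triangles attached to the opposite corners `u₁` (index 0) and `u₃`
(index 2), hexagons to `u₂` (index 1) and `u₄` (index 3). -/
def rsG' (p : ℕ) : LGraph p :=
  rsGraph p (fun t => if t.val < 2 then 0 else 2) (fun s => if s.val < 2 then 1 else 3)
/-! ### Graph-level separation by node classifiers -/

/-- `G ≡_{GNN} G'`: for every GNN node classifier, the multisets of classifier
values over all nodes coincide. -/
noncomputable def gnnGraphEquiv (p : ℕ) (G G' : LGraph p) : Prop :=
  ∀ A : GNN p 1, Finset.univ.val.map (A.cls G) = Finset.univ.val.map (A.cls G')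

/-- `G ≡_{HE-GNN-(d)} G'`: for every HE-GNN node classifier of nesting depth
`d`, the multisets of classifier values over all nodes coincide. -/
noncomputable def hegnnGraphEquiv (p d : ℕ) (G G' : LGraph p) : Prop :=
  ∀ A : HEGNN d p 1, Finset.univ.val.map (A.cls G) = Finset.univ.val.map (A.cls G')

/-- The eccentricity of `u` in `G`: the maximal distance from `u` to any node. -/
noncomputable def LGraph.eccFrom {p : ℕ} (G : LGraph p) (u : G.V) : ℕ :=
  Finset.univ.sup (fun w => sInf {r | G.within u r w})


/-!
The upper bounds come from explicit dependency functions: enumerate the nodes starting at `v`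
and let each depend on its predecessor (rank at most `|V|`); take `dep ≡ ⊥` (rank `0`, allowed
exactly when `G` is acyclic); when every cycle passes through `v`, let every other node depend
on `v` (rank at most `1`). A dependency function of rank `0` is `⊥` everywhere, so then the class
of `⊥`, which is all of `V`, is acyclic.

For `tw(G) ≤ k + 1` from a dependency function `dep` of rank `k`: the edges inside the classes
of `dep` form a forest; root each of its components (at `v` for the component of `v`) and take
breadth-first parents. Rootedness forces every dependency chain to end at a node of the
component of `v`, so the chains have no cycles and that component is the whole class of `⊥`.
Joining each node to its forest parent, or, at a component root `u ≠ v`, to `dep u`, decreases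
`(|deps u|, depth)` lexicographically, which gives a tree on `V`. The bags `{u, parent u} ∪ deps u`
have at most `k + 2` nodes and cover every edge: an edge inside a class joins a node to its forest
parent, and any other edge joins some `u` to a node of `deps u`. The bags containing `x` are
closed under moving to the tree parent until `x` is reached, so they form a subtree.
-/

section Deps

variable {V : Type} {dep : V → Option V} {a b c y : V}

lemma deps_subset (hb : b ∈ deps dep a) : deps dep b ⊆ deps dep a := by
  intro c hc
  change DepCl dep b c at hc
  induction hc with
  | base h => exact DepCl.step hb h
  | step _ h ih => exact DepCl.step ih h

lemma deps_eq_empty (h : dep a = none) : deps dep a = ∅ := by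
  refine Set.eq_empty_of_forall_notMem fun x hx => ?_
  change DepCl dep a x at hx
  induction hx with
  | base h' => simp [h] at h'
  | step _ _ ih => exact ih

lemma deps_eq_insert (h : dep a = some y) : deps dep a = insert y (deps dep y) := by
  ext x
  refine ⟨fun hx => ?_, ?_⟩
  · change DepCl dep a x at hx
    induction hx with
    | base h' => exact .inl (Option.some_injective _ (h'.symm.trans h))
    | step _ h' ih =>
      rcases ih with rfl | ih
      · exact .inr (DepCl.base h')
      · exact .inr (DepCl.step ih h')
  · rintro (rfl | hx)
    · exact DepCl.base h
    · exact deps_subset (DepCl.base h) hx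

lemma deps_congr (h : dep a = dep b) : deps dep a = deps dep b := by
  cases ha : dep a with
  | none => rw [deps_eq_empty ha, deps_eq_empty (h.symm.trans ha)]
  | some y => rw [deps_eq_insert ha, deps_eq_insert (h.symm.trans ha)]

lemma deps_total (hb : b ∈ deps dep a) (hc : c ∈ deps dep a) :
    b = c ∨ c ∈ deps dep b ∨ b ∈ deps dep c := by
  change DepCl dep a c at hc
  induction hc with
  | base h =>
    rw [deps_eq_insert h] at hb
    exact hb.imp_right Or.inr
  | step _ h ih =>
    rcases ih with rfl | ih | ih
    · exact .inr (.inl (DepCl.base h))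
    · exact .inr (.inl (DepCl.step ih h))
    · rw [deps_eq_insert h] at ih
      exact ih.imp_right Or.inr

lemma notMem_deps_self_of_mem_deps {w : V} (hw : w ∈ deps dep a) (hw' : dep w = none) :
    a ∉ deps dep a := by
  intro ha
  have back : ∀ x ∈ deps dep a, a ∈ insert x (deps dep x) := by
    intro x hx
    change DepCl dep a x at hx
    induction hx with
    | base h => rwa [deps_eq_insert h] at ha
    | @step x z _ h ih =>
      rw [deps_eq_insert h] at ih
      rcases ih with rfl | ih
      · rwa [deps_eq_insert h] at ha
      · exact ih
  have haw : a = w := by simpa [deps_eq_empty hw'] using back w hw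
  simp [haw, deps_eq_empty hw'] at ha

lemma nodeRank_eq_ncard : nodeRank dep a = (deps dep a).ncard :=
  Nat.card_coe_set_eq _

lemma nodeRank_congr (h : dep a = dep b) : nodeRank dep a = nodeRank dep b := by
  rw [nodeRank_eq_ncard, nodeRank_eq_ncard, deps_congr h]

lemma nodeRank_eq_succ [Finite V] (h : dep a = some y) (hy : y ∉ deps dep y) :
    nodeRank dep a = nodeRank dep y + 1 := by
  rw [nodeRank_eq_ncard, nodeRank_eq_ncard, deps_eq_insert h, Set.ncard_insert_of_notMem hy]

lemma nodeRank_eq_zero_iff [Finite V] : nodeRank dep a = 0 ↔ dep a = none := by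
  rw [nodeRank_eq_ncard, Set.ncard_eq_zero]
  cases ha : dep a with
  | none => simp [deps_eq_empty ha]
  | some y => simpa [deps_eq_insert ha] using (Set.insert_nonempty y _).ne_empty

lemma nodeRank_le_card [Fintype V] : nodeRank dep a ≤ Fintype.card V := by
  rw [nodeRank_eq_ncard, ← Nat.card_eq_fintype_card, ← Set.ncard_univ]
  exact Set.ncard_le_ncard (Set.subset_univ _)

end Deps

section PredDep

variable {V : Type} {n : ℕ} (e : V ≃ Fin n)

def predDep (u : V) : Option V :=
  if (e u).val = 0 then none
  else some (e.symm ⟨(e u).val - 1, lt_of_le_of_lt (Nat.sub_le _ _) (e u).isLt⟩)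

variable {e}

lemma predDep_eq_none {u : V} : predDep e u = none ↔ (e u).val = 0 := by
  unfold predDep
  split_ifs with h <;> simp [h]

lemma predDep_eq_some {u w : V} : predDep e u = some w ↔ (e w).val + 1 = (e u).val := by
  unfold predDep
  split_ifs with h
  · simp only [false_iff]
    omega
  · rw [Option.some_inj, Equiv.symm_apply_eq, Fin.ext_iff, Fin.val_mk]
    omega

lemma predDep_injective : Function.Injective (predDep e) := by
  intro a b hab
  apply e.injective
  apply Fin.ext
  cases ha : predDep e a with
  | none => rw [ha, eq_comm, predDep_eq_none] at hab; rw [predDep_eq_none.1 ha, hab]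
  | some y => rw [ha, eq_comm, predDep_eq_some] at hab; rw [← predDep_eq_some.1 ha, hab]

lemma mem_deps_predDep {u x : V} : x ∈ deps (predDep e) u ↔ (e x).val < (e u).val := by
  constructor
  · intro hx
    change DepCl _ u x at hx
    induction hx with
    | base h => have := predDep_eq_some.1 h; omega
    | step _ h ih => have := predDep_eq_some.1 h; omega
  · intro hlt
    obtain ⟨m, hm⟩ : ∃ m, (e u).val = (e x).val + m + 1 := ⟨(e u).val - (e x).val - 1, by omega⟩
    induction m generalizing u with
    | zero => exact DepCl.base (predDep_eq_some.2 (by omega))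
    | succ m ih =>
      have hu : (e u).val - 1 < n := by omega
      have hw : predDep e u = some (e.symm ⟨(e u).val - 1, hu⟩) :=
        predDep_eq_some.2 (by simp; omega)
      rw [deps_eq_insert hw]
      exact .inr (ih (by simp; omega) (by simp; omega))

end PredDep

namespace LGraph

variable {p : ℕ} {G : LGraph p}

lemma Rooted.induction_on {v : G.V} (hroot : G.Rooted v) {P : G.V → Prop} (hv : P v)
    (hadj : ∀ a b, G.adj a b → P a → P b) (u : G.V) : P u := by
  obtain ⟨r, hr⟩ := hroot u
  induction r generalizing u with
  | zero => exact (hr : u = v) ▸ hv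
  | succ r ih =>
    rcases hr with hr | ⟨w, hw, hwu⟩
    exacts [ih u hr, hadj w u hwu (ih w hw)]

lemma not_cycleIn_of_subsingleton {S : Set G.V} (hS : S.Subsingleton) : ¬ G.CycleIn S := by
  rintro ⟨n, c, hn, hinj, hmem, -⟩
  have := hinj (hS (hmem ⟨0, by omega⟩) (hmem ⟨1, by omega⟩))
  simp [Fin.ext_iff] at this

lemma cycleIn_of_isCycle {H : SimpleGraph G.V} (hH : ∀ a b, H.Adj a b → G.adj a b)
    {x : G.V} {c : H.Walk x x} (hc : c.IsCycle) {S : Set G.V} (hS : ∀ y ∈ c.support, y ∈ S) :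
    G.CycleIn S := by
  have h3 := hc.three_le_length
  refine ⟨c.length, fun i => c.getVert i, h3, fun i j hij => ?_,
    fun i => hS _ (c.getVert_mem_support _), fun i => hH _ _ ?_⟩
  · exact Fin.ext (hc.getVert_injOn' (by simp; omega) (by simp; omega) hij)
  · have hadj := c.adj_getVert_succ i.isLt
    change H.Adj (c.getVert i) (c.getVert ((i.val + 1) % c.length))
    rcases Nat.lt_or_ge (i.val + 1) c.length with hi | hi
    · rwa [Nat.mod_eq_of_lt hi]
    · rw [show i.val + 1 = c.length by omega, Nat.mod_self, c.getVert_zero]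
      rwa [show i.val + 1 = c.length by omega, c.getVert_length] at hadj

lemma ReachIn.trans {S : Set G.V} {a b c : G.V} (hab : G.ReachIn S a b)
    (hbc : G.ReachIn S b c) : G.ReachIn S a c := by
  induction hbc with
  | refl _ => exact hab
  | tail _ hadj hc ih => exact ih.tail hadj hc

lemma ReachIn.mem_left {S : Set G.V} {a b : G.V} (h : G.ReachIn S a b) : a ∈ S := by
  induction h with
  | refl ha => exact ha
  | tail _ _ _ ih => exact ih

lemma ReachIn.symm {S : Set G.V} {a b : G.V} (h : G.ReachIn S a b) : G.ReachIn S b a := by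
  induction h with
  | refl ha => exact .refl ha
  | tail hab hadj hc ih => exact ((ReachIn.refl hc).tail (G.symm hadj) ih.mem_left).trans ih

lemma ReachIn.exists_within {S : Set G.V} {a b : G.V} (h : G.ReachIn S a b) :
    ∃ r, G.within a r b := by
  induction h with
  | refl _ => exact ⟨0, rfl⟩
  | tail _ hadj _ ih =>
    obtain ⟨r, hr⟩ := ih
    exact ⟨r + 1, .inr ⟨_, hr, hadj⟩⟩

end LGraph

namespace SimpleGraph

variable {V : Type*} {F : SimpleGraph V} {r u w : V}

/-- The penultimate node of a shortest path from `r` to `u`; this is `u` itself if `u = r` or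
if `u` is not reachable from `r`. -/
noncomputable def bfsParent (F : SimpleGraph V) (r u : V) : V :=
  if h : F.Reachable r u then h.exists_path_of_dist.choose.penultimate else u

lemma exists_path_bfsParent (h : F.Reachable r u) : ∃ q : F.Walk r u,
    q.IsPath ∧ q.length = F.dist r u ∧ F.bfsParent r u = q.penultimate := by
  obtain ⟨hq, hlen⟩ := h.exists_path_of_dist.choose_spec
  exact ⟨_, hq, hlen, dif_pos h⟩

lemma bfsParent_self : F.bfsParent r r = r := by
  obtain ⟨q, -, hlen, hpar⟩ := exists_path_bfsParent (Reachable.refl (G := F) r)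
  rw [hpar, (Walk.eq_nil_iff_nil (p := q)).2 (Walk.length_eq_zero_iff.1 (by simpa using hlen))]
  rfl

lemma adj_bfsParent (h : F.Reachable r u) (hne : u ≠ r) : F.Adj (F.bfsParent r u) u := by
  obtain ⟨q, -, -, hpar⟩ := exists_path_bfsParent h
  exact hpar ▸ q.adj_penultimate fun hnil => hne hnil.eq.symm

lemma dist_bfsParent_lt (h : F.Reachable r u) (hne : u ≠ r) :
    F.dist r (F.bfsParent r u) < F.dist r u := by
  obtain ⟨q, -, hlen, hpar⟩ := exists_path_bfsParent h
  have hpos : 0 < q.length := hlen ▸ h.pos_dist_of_ne hne.symm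
  have hle : F.dist r (F.bfsParent r u) ≤ q.dropLast.length := by
    rw [hpar]
    exact dist_le _
  rw [Walk.length_dropLast] at hle
  omega

lemma IsAcyclic.bfsParent_eq_or_eq (hF : F.IsAcyclic) (h : F.Reachable r u) (hadj : F.Adj u w) :
    F.bfsParent r u = w ∨ F.bfsParent r w = u := by
  classical
  obtain ⟨p, hp, -, hpu⟩ := exists_path_bfsParent h
  obtain ⟨q, hq, -, hqw⟩ := exists_path_bfsParent (h.trans hadj.reachable)
  by_cases hw : w ∈ p.support
  · exact .inl (hpu ▸ (hF.eq_penultimate_of_adj_end hp hadj hw).symm)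
  · have hu := hF.mem_support_of_ne_mem_support_of_adj_of_isPath hq hp hadj.symm hw
    exact .inr (hqw ▸ (hF.eq_penultimate_of_adj_end hq hadj.symm hu).symm)

noncomputable def compRoot (F : SimpleGraph V) (v u : V) : V :=
  open Classical in
  if F.Reachable v u then v else Quot.out (F.connectedComponentMk u)

lemma reachable_compRoot (v u : V) : F.Reachable (F.compRoot v u) u := by
  unfold compRoot
  split_ifs with h
  · exact h
  · exact ConnectedComponent.exact (Quot.out_eq _)

lemma compRoot_eq_of_reachable (v : V) (h : F.Reachable u w) : F.compRoot v u = F.compRoot v w := by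
  unfold compRoot
  have hmk : F.connectedComponentMk u = F.connectedComponentMk w := ConnectedComponent.sound h
  by_cases hu : F.Reachable v u
  · rw [if_pos hu, if_pos (hu.trans h)]
  · rw [if_neg hu, if_neg fun hw => hu (hw.trans h.symm), hmk]

lemma compRoot_of_reachable (h : F.Reachable r u) : F.compRoot r u = r :=
  if_pos h

end SimpleGraph

lemma Fin.exists_cyclic_pred {n : ℕ} (hn : 3 ≤ n) (i : Fin n) :
    ∃ j : Fin n, (⟨(j.val + 1) % n, Nat.mod_lt _ j.pos⟩ : Fin n) = i ∧
      (⟨(i.val + 1) % n, Nat.mod_lt _ i.pos⟩ : Fin n) ≠ j := by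
  simp only [ne_eq, Fin.ext_iff]
  rcases Nat.eq_zero_or_pos i.val with hi | hi
  · refine ⟨⟨n - 1, by omega⟩, ?_, ?_⟩
    · simp [show n - 1 + 1 = n by omega, hi]
    · rw [hi, Nat.mod_eq_of_lt (by omega)]
      simp only
      omega
  · refine ⟨⟨i.val - 1, by omega⟩, ?_, ?_⟩
    · simp [show i.val - 1 + 1 = i.val by omega, Nat.mod_eq_of_lt i.isLt]
    · rcases Nat.lt_or_ge (i.val + 1) n with h | h
      · rw [Nat.mod_eq_of_lt h]
        simp only
        omega
      · rw [show i.val + 1 = n by omega, Nat.mod_self]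
        simp only
        omega

namespace LGraph

section ParentGraph

variable {V : Type} [Fintype V] [DecidableEq V] {par : V → Option V}
  {α : Type*} [LinearOrder α] {μ : V → α}

def ofParent (par : V → Option V) : LGraph 0 where
  V := V
  fintypeV := inferInstance
  decEqV := inferInstance
  adj a b := a ≠ b ∧ (par a = some b ∨ par b = some a)
  symm h := ⟨h.1.symm, h.2.symm⟩
  irrefl _ h := h.1 rfl
  lab _ _ := False

/-- On a cycle, the node of largest rank would have both of its cycle neighbours as parent. -/
lemma ofParent_acyclic (hμ : ∀ a b, par a = some b → μ b < μ a) : (ofParent par).Acyclic := by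
  rintro ⟨n, c, hn, hinj, -, hadj⟩
  obtain ⟨i, -, hmax⟩ := Finset.exists_max_image Finset.univ (fun i => μ (c i))
    ⟨⟨0, by omega⟩, Finset.mem_univ _⟩
  have hpar : ∀ j, (ofParent par).adj (c i) (c j) → par (c i) = some (c j) := fun j h =>
    h.2.resolve_right fun hj => (hμ _ _ hj).not_ge (hmax j (Finset.mem_univ _))
  obtain ⟨j, hji, hij⟩ := Fin.exists_cyclic_pred hn i
  have hnext := hpar _ (hadj i)
  have hprev := hpar j ((ofParent par).symm (hji ▸ hadj j))
  exact hij (hinj (Option.some_injective _ (hnext.symm.trans hprev)))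

lemma ofParent_connectedIn [WellFoundedLT α] (hμ : ∀ a b, par a = some b → μ b < μ a)
    {B : Set V} {x : V} (hx : x ∈ B) (hB : ∀ t ∈ B, t ≠ x → ∃ s ∈ B, par t = some s) :
    (ofParent par).ConnectedIn B := by
  have hreach : ∀ t ∈ B, (ofParent par).ReachIn B x t := by
    intro t
    induction t using (InvImage.wf μ wellFounded_lt).induction with
    | _ t ih =>
      intro ht
      by_cases htx : t = x
      · subst htx
        exact .refl hx
      obtain ⟨s, hs, hts⟩ := hB t ht htx
      exact (ih s (hμ _ _ hts) hs).tail ⟨fun h => (hμ _ _ hts).ne (congrArg μ h), .inr hts⟩ ht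
  exact fun a ha b hb => (hreach a ha).symm.trans (hreach b hb)

end ParentGraph

variable {p : ℕ} {G : LGraph p} {v : G.V} {dep : G.V → Option G.V}

def sameDepGraph (G : LGraph p) (dep : G.V → Option G.V) : SimpleGraph G.V where
  Adj a b := G.adj a b ∧ dep a = dep b
  symm.symm a b (h : G.adj a b ∧ dep a = dep b) := ⟨G.symm h.1, h.2.symm⟩
  loopless.irrefl a h := G.irrefl a h.1

lemma dep_eq_of_reachable {a b : G.V} (h : (G.sameDepGraph dep).Reachable a b) :
    dep a = dep b := by
  obtain ⟨q⟩ := h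
  induction q with
  | nil => rfl
  | cons hadj _ ih => exact hadj.2.trans ih

lemma isAcyclic_sameDepGraph (h : ∀ o, ¬ G.CycleIn {w | dep w = o}) :
    (G.sameDepGraph dep).IsAcyclic := fun x c hc =>
  h (dep x) (G.cycleIn_of_isCycle (H := G.sameDepGraph dep) (fun _ _ h => h.1) hc fun y hy =>
    (dep_eq_of_reachable (c.takeUntil y hy).reachable).symm)

end LGraph

section DepFun

variable {p : ℕ} {G : LGraph p} {v : G.V} {dep : G.V → Option G.V}

lemma IsDepFun.exists_terminal (hroot : G.Rooted v) (hdep : IsDepFun G v dep) (u : G.V) :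
    ∃ w ∈ insert u (deps dep u), dep w = none ∧ (G.sameDepGraph dep).Reachable v w := by
  induction u using hroot.induction_on with
  | hv => exact ⟨v, .inl rfl, hdep.1, .refl v⟩
  | hadj a b hab ha =>
    obtain ⟨w, hw, hwn, hvw⟩ := ha
    have hwa : dep a ≠ none → w ∈ deps dep a := fun hna =>
      hw.resolve_left fun h => hna (h ▸ hwn)
    rcases hdep.2.1 hab with heq | hadeps | hbdeps
    · cases hda : dep a with
      | none =>
        obtain rfl : w = a := by simpa [deps_eq_empty hda] using hw
        exact ⟨b, .inl rfl, heq ▸ hwn, hvw.trans (SimpleGraph.Adj.reachable ⟨hab, heq⟩)⟩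
      | some y =>
        exact ⟨w, .inr (deps_congr heq ▸ hwa (by simp [hda])), hwn, hvw⟩
    · exact ⟨w, .inr (Set.insert_subset hadeps (deps_subset hadeps) hw), hwn, hvw⟩
    · rcases deps_total hbdeps (hwa fun h => by simp [deps_eq_empty h] at hbdeps) with
        rfl | h | h
      · exact ⟨b, .inl rfl, hwn, hvw⟩
      · exact ⟨w, .inr h, hwn, hvw⟩
      · simp [deps_eq_empty hwn] at h

lemma IsDepFun.notMem_deps_self (hroot : G.Rooted v) (hdep : IsDepFun G v dep) (u : G.V) :
    u ∉ deps dep u := by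
  obtain ⟨w, hw | hw, hwn, -⟩ := hdep.exists_terminal hroot u
  · simp [hw ▸ deps_eq_empty hwn]
  · exact notMem_deps_self_of_mem_deps hw hwn

lemma IsDepFun.reachable_of_eq_none (hroot : G.Rooted v) (hdep : IsDepFun G v dep) {u : G.V}
    (hu : dep u = none) : (G.sameDepGraph dep).Reachable v u := by
  obtain ⟨w, hw, -, hvw⟩ := hdep.exists_terminal hroot u
  have hwu : w = u := by simpa [deps_eq_empty hu] using hw
  exact hwu ▸ hvw

end DepFun

namespace LGraph

open SimpleGraph

variable {p : ℕ} {G : LGraph p} {v : G.V} {dep : G.V → Option G.V} {s t x : G.V}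

noncomputable def classRoot (G : LGraph p) (v : G.V) (dep : G.V → Option G.V) (u : G.V) : G.V :=
  (G.sameDepGraph dep).compRoot v u

noncomputable def classParent (G : LGraph p) (v : G.V) (dep : G.V → Option G.V) (u : G.V) : G.V :=
  (G.sameDepGraph dep).bfsParent (G.classRoot v dep u) u

noncomputable def decompParent (G : LGraph p) (v : G.V) (dep : G.V → Option G.V) (u : G.V) :
    Option G.V :=
  if u = G.classRoot v dep u then dep u else some (G.classParent v dep u)

def decompBag (G : LGraph p) (v : G.V) (dep : G.V → Option G.V) (u : G.V) : Set G.V :=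
  insert u (insert (G.classParent v dep u) (deps dep u))

noncomputable def decompRank (G : LGraph p) (v : G.V) (dep : G.V → Option G.V) (u : G.V) :
    ℕ ×ₗ ℕ :=
  toLex (nodeRank dep u, (G.sameDepGraph dep).dist (G.classRoot v dep u) u)

lemma reachable_classRoot (u : G.V) : (G.sameDepGraph dep).Reachable (G.classRoot v dep u) u :=
  reachable_compRoot v u

lemma classRoot_eq_of_adj {a b : G.V} (h : (G.sameDepGraph dep).Adj a b) :
    G.classRoot v dep a = G.classRoot v dep b :=
  compRoot_eq_of_reachable v h.reachable

lemma classParent_eq_self (h : t = G.classRoot v dep t) : G.classParent v dep t = t := by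
  unfold classParent
  rw [← h]
  exact bfsParent_self

lemma adj_classParent (h : t ≠ G.classRoot v dep t) :
    (G.sameDepGraph dep).Adj (G.classParent v dep t) t :=
  adj_bfsParent (reachable_classRoot t) h

lemma decompRank_lt (hroot : G.Rooted v) (hdep : IsDepFun G v dep)
    (h : G.decompParent v dep t = some s) : G.decompRank v dep s < G.decompRank v dep t := by
  unfold decompParent at h
  split_ifs at h with ht
  · have := nodeRank_eq_succ h (hdep.notMem_deps_self hroot s)
    exact Prod.Lex.toLex_lt_toLex.2 (.inl (by omega))
  · obtain rfl := Option.some_injective _ h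
    have hadj := adj_classParent ht
    refine Prod.Lex.toLex_lt_toLex.2 (.inr ⟨nodeRank_congr hadj.2, ?_⟩)
    simp only [classRoot_eq_of_adj hadj]
    exact dist_bfsParent_lt (reachable_classRoot t) ht

lemma exists_decompParent_eq_some (hroot : G.Rooted v) (hdep : IsDepFun G v dep) (ht : t ≠ v) :
    ∃ s, G.decompParent v dep t = some s := by
  unfold decompParent
  split_ifs with htr
  · cases hdt : dep t with
    | some s => exact ⟨s, rfl⟩
    | none =>
      exact absurd (htr.trans (compRoot_of_reachable (hdep.reachable_of_eq_none hroot hdt))) ht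
  · exact ⟨_, rfl⟩

lemma exists_decompParent_mem_decompBag (ht : x ∈ G.decompBag v dep t) (hxt : t ≠ x) :
    ∃ s, x ∈ G.decompBag v dep s ∧ G.decompParent v dep t = some s := by
  unfold decompParent
  split_ifs with htr
  · have hx : x ∈ deps dep t := by
      rcases ht with h | h | h
      · exact absurd h.symm hxt
      · exact absurd (h.trans (classParent_eq_self htr)).symm hxt
      · exact h
    cases hdt : dep t with
    | none => simp [deps_eq_empty hdt] at hx
    | some z =>
      rw [deps_eq_insert hdt] at hx
      exact ⟨z, hx.imp id .inr, rfl⟩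
  · refine ⟨_, ?_, rfl⟩
    rcases ht with h | h | h
    · exact absurd h.symm hxt
    · exact .inl h
    · exact .inr (.inr (deps_congr (adj_classParent htr).2 ▸ h))

lemma exists_mem_decompBag_of_adj (hdep : IsDepFun G v dep) {a b : G.V} (hadj : G.adj a b) :
    ∃ t, a ∈ G.decompBag v dep t ∧ b ∈ G.decompBag v dep t := by
  rcases hdep.2.1 hadj with heq | ha | hb
  · have hF : (G.sameDepGraph dep).Adj a b := ⟨hadj, heq⟩
    rcases (isAcyclic_sameDepGraph hdep.2.2).bfsParent_eq_or_eq (reachable_classRoot a) hF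
      with h | h
    · exact ⟨a, .inl rfl, .inr (.inl h.symm)⟩
    · refine ⟨b, .inr (.inl ?_), .inl rfl⟩
      rw [classParent, ← classRoot_eq_of_adj hF, h]
  · exact ⟨b, .inr (.inr ha), .inl rfl⟩
  · exact ⟨a, .inl rfl, .inr (.inr hb)⟩

lemma card_decompBag_le (t : G.V) : Nat.card (G.decompBag v dep t) ≤ nodeRank dep t + 2 := by
  rw [Nat.card_coe_set_eq, nodeRank_eq_ncard]
  exact (Set.ncard_insert_le _ _).trans (Nat.succ_le_succ (Set.ncard_insert_le _ _))

lemma treewidth_le_of_isDepFun (hroot : G.Rooted v) (hdep : IsDepFun G v dep) {k : ℕ}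
    (hk : ∀ w, nodeRank dep w ≤ k) : treewidth G ≤ k + 1 := by
  have hμ : ∀ a b, G.decompParent v dep a = some b → G.decompRank v dep b < G.decompRank v dep a :=
    fun _ _ => decompRank_lt hroot hdep
  let D : TreeDecomp p G :=
    { T := ofParent (G.decompParent v dep)
      conn := fun a b => (ofParent_connectedIn hμ (Set.mem_univ v)
        (fun t _ htv => (exists_decompParent_eq_some hroot hdep htv).imp
          fun s hs => ⟨Set.mem_univ s, hs⟩) a trivial b trivial).exists_within
      acyc := ofParent_acyclic hμ
      bag := G.decompBag v dep
      cover_v := fun u => ⟨u, .inl rfl⟩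
      cover_e := exists_mem_decompBag_of_adj hdep
      subtree := fun x => ofParent_connectedIn hμ (.inl rfl)
        fun _ ht hxt => exists_decompParent_mem_decompBag ht hxt }
  exact Nat.sInf_le ⟨D, fun t => (card_decompBag_le (v := v) (dep := dep) t).trans
    (Nat.add_le_add_right (hk t) 2)⟩

end LGraph

section EgoRank

variable {p : ℕ} {G : LGraph p} {v : G.V}

lemma egoRank_le_of_isDepFun {dep : G.V → Option G.V} (hdep : IsDepFun G v dep) {k : ℕ}
    (hk : ∀ w, nodeRank dep w ≤ k) : egoRank G v ≤ k :=
  Nat.sInf_le ⟨dep, hdep, hk⟩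

lemma isDepFun_predDep {n : ℕ} (e : G.V ≃ Fin n) (he : (e v).val = 0) :
    IsDepFun G v (predDep e) := by
  unfold IsDepFun
  refine ⟨predDep_eq_none.2 he, fun {a b} hab => .inr ?_, fun o =>
    G.not_cycleIn_of_subsingleton fun a ha b hb => predDep_injective (ha.trans hb.symm)⟩
  have hne : (e a).val ≠ (e b).val := fun h => G.irrefl b (e.injective (Fin.ext h) ▸ hab)
  rcases Nat.lt_or_gt_of_ne hne with h | h
  exacts [.inl (mem_deps_predDep.2 h), .inr (mem_deps_predDep.2 h)]

lemma exists_isDepFun (G : LGraph p) (v : G.V) : ∃ dep, IsDepFun G v dep := by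
  let e₀ := Fintype.equivFin G.V
  let e := e₀.trans (Equiv.swap (e₀ v) ⟨0, (e₀ v).pos⟩)
  exact ⟨predDep e, isDepFun_predDep e (by simp [e])⟩

lemma exists_isDepFun_nodeRank_le_egoRank (G : LGraph p) (v : G.V) :
    ∃ dep, IsDepFun G v dep ∧ ∀ w, nodeRank dep w ≤ egoRank G v := by
  obtain ⟨dep, hdep⟩ := exists_isDepFun G v
  exact Nat.sInf_mem (s := {k | ∃ dep, IsDepFun G v dep ∧ ∀ w, nodeRank dep w ≤ k})
    ⟨_, dep, hdep, fun _ => nodeRank_le_card⟩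

lemma egoRank_le_card : egoRank G v ≤ Fintype.card G.V := by
  obtain ⟨dep, hdep⟩ := exists_isDepFun G v
  exact egoRank_le_of_isDepFun hdep fun _ => nodeRank_le_card

lemma egoRank_eq_zero_iff : egoRank G v = 0 ↔ G.Acyclic := by
  constructor
  · intro h
    obtain ⟨dep, hdep, hk⟩ := exists_isDepFun_nodeRank_le_egoRank G v
    have hnone : {w | dep w = none} = Set.univ :=
      Set.eq_univ_of_forall fun w => nodeRank_eq_zero_iff.1 (Nat.le_zero.1 (h ▸ hk w))
    unfold LGraph.Acyclic
    exact hnone ▸ hdep.2.2 none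
  · intro h
    have hdep : IsDepFun G v fun _ => none := by
      unfold IsDepFun
      refine ⟨rfl, fun _ => .inl rfl, fun o => ?_⟩
      cases o with
      | none => simpa [LGraph.Acyclic] using h
      | some _ => simpa using G.not_cycleIn_of_subsingleton Set.subsingleton_empty
    exact Nat.le_zero.1 (egoRank_le_of_isDepFun hdep fun _ => (nodeRank_eq_zero_iff.2 rfl).le)

lemma egoRank_le_one (hc : G.CAcyclic v) : egoRank G v ≤ 1 := by
  classical
  let dep : G.V → Option G.V := fun u => if u = v then none else some v
  have hv : dep v = none := if_pos rfl
  have hu : ∀ {u}, u ≠ v → dep u = some v := fun hu => if_neg hu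
  have hnone : {u | dep u = none} ⊆ {v} := fun u h =>
    by_contra fun hne => Option.some_ne_none _ ((hu hne).symm.trans h)
  have hdep : IsDepFun G v dep := by
    unfold IsDepFun
    refine ⟨hv, fun {a b} hab => ?_, ?_⟩
    · by_cases ha : a = v
      · subst ha
        exact .inr (.inl (DepCl.base (hu fun hb => G.irrefl _ (hb ▸ hab))))
      by_cases hb : b = v
      · subst hb
        exact .inr (.inr (DepCl.base (hu ha)))
      · exact .inl ((hu ha).trans (hu hb).symm)
    · rintro o ⟨n, c, hn, hinj, hmem, hadj⟩
      obtain ⟨i, hi⟩ := hc n c hn hinj hadj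
      have ho : o = none := (hmem i).symm.trans (hi ▸ hv)
      exact G.not_cycleIn_of_subsingleton (Set.subsingleton_singleton.anti hnone)
        ⟨n, c, hn, hinj, ho ▸ hmem, hadj⟩
  refine egoRank_le_of_isDepFun hdep fun u => ?_
  have hsub : deps dep u ⊆ {v} := by
    by_cases h : u = v
    · simp [deps_eq_empty (h ▸ hv)]
    · simp [deps_eq_insert (hu h), deps_eq_empty hv]
  rw [nodeRank_eq_ncard, ← Set.ncard_singleton v]
  exact Set.ncard_le_ncard hsub

end EgoRank

/-- For every rooted graph `(G,v)`:
(1) `tree-width(G) − 1 ≤ ego-rank(G,v) ≤ |V|`;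
(2) `ego-rank(G,v) = 0` iff `G` is acyclic;
(3) `ego-rank(G,v) ≤ 1` whenever `(G,v)` is c-acyclic (hence `= 1` if moreover `G`
has a cycle). -/
theorem egoRank_bounds (p : ℕ) (G : LGraph p) (v : G.V) (hroot : G.Rooted v) :
    (treewidth G - 1 ≤ egoRank G v ∧ egoRank G v ≤ Fintype.card G.V) ∧
    (egoRank G v = 0 ↔ G.Acyclic) ∧
    (G.CAcyclic v → egoRank G v ≤ 1) ∧
    (G.CAcyclic v → ¬ G.Acyclic → egoRank G v = 1) := by
  obtain ⟨dep, hdep, hk⟩ := exists_isDepFun_nodeRank_le_egoRank G v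
  have htw : treewidth G ≤ egoRank G v + 1 := LGraph.treewidth_le_of_isDepFun hroot hdep hk
  refine ⟨⟨by omega, egoRank_le_card⟩, egoRank_eq_zero_iff, egoRank_le_one, fun hc hcyc => ?_⟩
  have := egoRank_le_one hc
  have : egoRank G v ≠ 0 := fun h => hcyc (egoRank_eq_zero_iff.1 h)
  omega
end

section
/- For every graded modal logic formula φ there is a GNN A such that cls_A = cls_φ, i.e., for every pointed graph (G,v), cls_A(G,v) = 1 if G,v ⊨ φ and cls_A(G,v) = 0 otherwise. Moreover, the GNN in question uses only pointwise Sum as aggregation functions and ReLU feed-forward neural networks as combination functions. -/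
open Classical

/-! The GNN keeps one coordinate per subformula of `φ`, holding its truth value as `0` or `1`.
A layer recomputes every coordinate from the node's own state and the sum of its neighbours'
states with at most two ReLU neurons: `relu (x + y - 1)` for a conjunction, `1 - relu x` for a
negation, and `relu (n - k) - relu (n - (k + 1))` for `◇^{≥ k+1} ψ`, where `n` is the number of
neighbours satisfying `ψ`. After an input layer reading the labels, `i` further layers make all
subformulas of height at most `i` correct, so `height φ + 2` layers compute `φ`. -/

structure ReLUPair (n : ℕ) where
  w₁ : Fin n → ℝ := 0
  d₁ : ℝ := 0
  c₁ : ℝ := 0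
  w₂ : Fin n → ℝ := 0
  d₂ : ℝ := 0
  c₂ : ℝ := 0
  b : ℝ := 0

namespace ReLUPair

def eval {n : ℕ} (u : ReLUPair n) (z : Fin n → ℝ) : ℝ :=
  u.c₁ * max 0 (u.w₁ ⬝ᵥ z + u.d₁) + u.c₂ * max 0 (u.w₂ ⬝ᵥ z + u.d₂) + u.b

/-- Stacking `m` such units side by side gives one hidden layer of width `m + m`. -/
theorem isReLUFFNN_eval {n m : ℕ} (u : Fin m → ReLUPair n) :
    IsReLUFFNN (fun z j => (u j).eval z) := by
  have h := IsReLUFFNN.comp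
    (IsReLUFFNN.comp (IsReLUFFNN.affine
      (Matrix.of (Fin.append (fun j => (u j).w₁) (fun j => (u j).w₂)))
      (Fin.append (fun j => (u j).d₁) (fun j => (u j).d₂))) IsReLUFFNN.relu)
    (IsReLUFFNN.affine
      (Matrix.of fun j =>
        Pi.single (Fin.castAdd m j) (u j).c₁ + Pi.single (Fin.natAdd m j) (u j).c₂)
      (fun j => (u j).b))
  convert h using 1
  funext z j
  rw [Pi.add_apply]
  simp only [eval, Matrix.mulVec, Matrix.of_apply, add_dotProduct, single_dotProduct]
  simp only [Pi.add_apply, Matrix.mulVec, Matrix.of_apply, Fin.append_left, Fin.append_right]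

def layer {n m : ℕ} (u : Fin m → ReLUPair (n + n)) : GNNLayer n m :=
  ⟨sumAgg n, fun z j => (u j).eval z⟩

theorem layer_sumReLU {n m : ℕ} (u : Fin m → ReLUPair (n + n)) : (layer u).SumReLU :=
  ⟨rfl, isReLUFFNN_eval u⟩

theorem layer_apply {p n m : ℕ} (u : Fin m → ReLUPair (n + n)) (G : LGraph p)
    (emb : G.V → Fin n → ℝ) (v : G.V) (j : Fin m) :
    (layer u).apply G emb v j =
      (u j).eval (Fin.append (emb v) (sumAgg n ((G.nbrFinset v).val.map emb))) :=
  rfl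

end ReLUPair

theorem sumAgg_map_apply {V : Type} {D : ℕ} (s : Finset V) (emb : V → Fin D → ℝ) (j : Fin D) :
    sumAgg D (s.val.map emb) j = ∑ u ∈ s, emb u j := by
  simp only [sumAgg, Multiset.map_map]
  rfl

theorem LGraph.sum_nbrFinset_ite {p : ℕ} (G : LGraph p) (v : G.V) (P : G.V → Prop) :
    ∑ u ∈ G.nbrFinset v, (if P u then (1 : ℝ) else 0) = Nat.card {u : G.V // G.adj v u ∧ P u} := by
  rw [Finset.sum_boole, Nat.card_eq_fintype_card, Fintype.card_subtype, LGraph.nbrFinset,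
    Finset.filter_filter]

theorem relu_sub_relu_natCast (n k : ℕ) :
    max 0 ((n : ℝ) - k) - max 0 ((n : ℝ) - (k + 1)) = if k + 1 ≤ n then 1 else 0 := by
  split_ifs with h
  · have : (k : ℝ) + 1 ≤ n := by exact_mod_cast h
    rw [max_eq_right (by linarith), max_eq_right (by linarith)]
    ring
  · have : (n : ℝ) ≤ k := by exact_mod_cast (by omega : n ≤ k)
    rw [max_eq_left (by linarith), max_eq_left (by linarith)]
    ring

namespace GML

variable {p : ℕ}

def subformulas : GML p → List (GML p)
  | .prop i => [.prop i]
  | .top => [.top]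
  | .and φ ψ => φ.subformulas ++ ψ.subformulas ++ [.and φ ψ]
  | .not φ => φ.subformulas ++ [.not φ]
  | .dia k φ => φ.subformulas ++ [.dia k φ]

theorem mem_subformulas_self (φ : GML p) : φ ∈ φ.subformulas := by
  cases φ <;> simp [subformulas]

theorem mem_subformulas_trans {φ ψ χ : GML p} (hψ : ψ ∈ φ.subformulas)
    (hχ : χ ∈ ψ.subformulas) : χ ∈ φ.subformulas := by
  induction φ with
  | prop i | top => simp_all [subformulas]
  | and φ₁ φ₂ ih₁ ih₂ =>
    simp only [subformulas, List.mem_append, List.mem_singleton] at hψ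
    rcases hψ with (h | h) | rfl
    · simp [subformulas, ih₁ h]
    · simp [subformulas, ih₂ h]
    · exact hχ
  | not φ₁ ih | dia k φ₁ ih =>
    simp only [subformulas, List.mem_append, List.mem_singleton] at hψ
    rcases hψ with h | rfl
    · simp [subformulas, ih h]
    · exact hχ

def height : GML p → ℕ
  | .prop _ | .top => 0
  | .and φ ψ => max φ.height ψ.height + 1
  | .not φ | .dia _ φ => φ.height + 1

end GML

namespace GMLToGNN

open GML

variable {p : ℕ}

abbrev dim (φ : GML p) : ℕ := φ.subformulas.length

/-- The coordinate of the state vector that stores `ψ`; junk if `ψ` is not a subformula. -/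
noncomputable def idx (φ ψ : GML p) : Fin (dim φ) :=
  if h : ψ ∈ φ.subformulas then (List.mem_iff_get.mp h).choose
  else ⟨0, List.length_pos_of_mem φ.mem_subformulas_self⟩

theorem get_idx {φ ψ : GML p} (h : ψ ∈ φ.subformulas) : φ.subformulas.get (idx φ ψ) = ψ := by
  rw [idx, dif_pos h]
  exact (List.mem_iff_get.mp h).choose_spec

/- A step layer reads `Fin.append x y`, where `x` is the node's own state and `y` the sum of its
neighbours' states. -/
noncomputable def selfCoord (φ ψ : GML p) : Fin (dim φ + dim φ) → ℝ :=
  Pi.single (Fin.castAdd _ (idx φ ψ)) 1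

noncomputable def nbrCoord (φ ψ : GML p) : Fin (dim φ + dim φ) → ℝ :=
  Pi.single (Fin.natAdd _ (idx φ ψ)) 1

theorem selfCoord_dotProduct (φ ψ : GML p) (x y : Fin (dim φ) → ℝ) :
    selfCoord φ ψ ⬝ᵥ Fin.append x y = x (idx φ ψ) := by
  simp [selfCoord, single_dotProduct]

theorem nbrCoord_dotProduct (φ ψ : GML p) (x y : Fin (dim φ) → ℝ) :
    nbrCoord φ ψ ⬝ᵥ Fin.append x y = y (idx φ ψ) := by
  simp only [nbrCoord, single_dotProduct, one_mul, Fin.append_right]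

def inputUnit : GML p → ReLUPair (p + p)
  | .prop i => { w₁ := Pi.single (Fin.castAdd p i) 1, c₁ := 1 }
  | .top => { b := 1 }
  | _ => {}

noncomputable def stepUnit (φ : GML p) : GML p → ReLUPair (dim φ + dim φ)
  | .prop i => { w₁ := selfCoord φ (.prop i), c₁ := 1 }
  | .top | .dia 0 _ => { b := 1 }
  | .and ψ χ => { w₁ := selfCoord φ ψ + selfCoord φ χ, d₁ := -1, c₁ := 1 }
  | .not ψ => { w₁ := selfCoord φ ψ, c₁ := -1, b := 1 }
  | .dia (k + 1) ψ =>
    { w₁ := nbrCoord φ ψ, d₁ := -k, c₁ := 1, w₂ := nbrCoord φ ψ, d₂ := -(k + 1), c₂ := -1 }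

noncomputable def inputLayer (φ : GML p) : GNNLayer p (dim φ) :=
  ReLUPair.layer fun j => inputUnit (φ.subformulas.get j)

noncomputable def stepLayer {m : ℕ} (φ : GML p) (ψs : Fin m → GML p) : GNNLayer (dim φ) m :=
  ReLUPair.layer fun j => stepUnit φ (ψs j)

def Correct (φ : GML p) (G : LGraph p) (i : ℕ) (emb : G.V → Fin (dim φ) → ℝ) : Prop :=
  ∀ ψ ∈ φ.subformulas, ψ.height ≤ i → ∀ v, emb v (idx φ ψ) = if ψ.sat G v then 1 else 0

theorem correct_inputLayer (φ : GML p) (G : LGraph p) :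
    Correct φ G 0 ((inputLayer φ).apply G G.embG) := by
  intro ψ hψ hh v
  rw [inputLayer, ReLUPair.layer_apply, get_idx hψ]
  cases ψ with
  | prop i =>
    by_cases h : G.lab v i <;> simp [inputUnit, ReLUPair.eval, LGraph.embG, GML.sat, h]
  | top => simp [inputUnit, ReLUPair.eval, GML.sat]
  | and | not | dia => simp [height] at hh

theorem stepUnit_eval {φ ψ : GML p} {G : LGraph p} {i : ℕ} {emb : G.V → Fin (dim φ) → ℝ}
    (hC : Correct φ G i emb) (hψ : ψ ∈ φ.subformulas) (hh : ψ.height ≤ i + 1) (v : G.V) :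
    (stepUnit φ ψ).eval (Fin.append (emb v) (sumAgg _ ((G.nbrFinset v).val.map emb)))
      = if ψ.sat G v then 1 else 0 := by
  have hchild : ∀ χ ∈ ψ.subformulas, χ.height ≤ i →
      ∀ u, emb u (idx φ χ) = if χ.sat G u then 1 else 0 :=
    fun χ hχ => hC χ (mem_subformulas_trans hψ hχ)
  cases ψ with
  | prop q =>
    by_cases h : (prop q).sat G v <;>
      simp [stepUnit, ReLUPair.eval, selfCoord_dotProduct, hC _ hψ (Nat.zero_le i) v, h]
  | top => simp [stepUnit, ReLUPair.eval, GML.sat]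
  | and ψ χ =>
    simp only [height] at hh
    simp only [stepUnit, ReLUPair.eval, add_dotProduct, selfCoord_dotProduct,
      hchild ψ (by simp [subformulas, mem_subformulas_self]) (by omega) v,
      hchild χ (by simp [subformulas, mem_subformulas_self]) (by omega) v, GML.sat]
    by_cases h₁ : ψ.sat G v <;> by_cases h₂ : χ.sat G v <;> norm_num [h₁, h₂]
  | not ψ =>
    simp only [height] at hh
    simp only [stepUnit, ReLUPair.eval, selfCoord_dotProduct,
      hchild ψ (by simp [subformulas, mem_subformulas_self]) (by omega) v, GML.sat]
    by_cases h : ψ.sat G v <;> norm_num [h]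
  | dia k ψ =>
    simp only [height] at hh
    rcases k with _ | k
    · simp [stepUnit, ReLUPair.eval, GML.sat]
    have hcount : sumAgg _ ((G.nbrFinset v).val.map emb) (idx φ ψ)
        = Nat.card {u : G.V // G.adj v u ∧ ψ.sat G u} := by
      rw [sumAgg_map_apply, ← G.sum_nbrFinset_ite]
      exact Finset.sum_congr rfl fun u _ =>
        hchild ψ (by simp [subformulas, mem_subformulas_self]) (by omega) u
    simp only [stepUnit, ReLUPair.eval, nbrCoord_dotProduct, hcount, one_mul, neg_one_mul,
      add_zero, ← sub_eq_add_neg, GML.sat]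
    rw [relu_sub_relu_natCast]
    congr

theorem correct_stepLayer {φ : GML p} {G : LGraph p} {i : ℕ} {emb : G.V → Fin (dim φ) → ℝ}
    (hC : Correct φ G i emb) : Correct φ G (i + 1) ((stepLayer φ φ.subformulas.get).apply G emb) :=
  fun ψ hψ hh v => by
    rw [stepLayer, ReLUPair.layer_apply, get_idx hψ]
    exact stepUnit_eval hC hψ hh v

noncomputable def stepGNN (φ : GML p) : ℕ → GNN (dim φ) 1
  | 0 => .last (stepLayer φ fun _ => φ)
  | n + 1 => .cons (stepLayer φ φ.subformulas.get) (stepGNN φ n)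

theorem stepGNN_sumReLU (φ : GML p) : ∀ n, (stepGNN φ n).SumReLU
  | 0 => ReLUPair.layer_sumReLU _
  | n + 1 => ⟨ReLUPair.layer_sumReLU _, stepGNN_sumReLU φ n⟩

theorem stepGNN_run {φ : GML p} {G : LGraph p} (n : ℕ) {i : ℕ} {emb : G.V → Fin (dim φ) → ℝ}
    (hC : Correct φ G i emb) (hh : φ.height ≤ i + n + 1) (v : G.V) :
    (stepGNN φ n).run G emb v 0 = if φ.sat G v then 1 else 0 := by
  induction n generalizing i emb with
  | zero => exact stepUnit_eval hC φ.mem_subformulas_self hh v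
  | succ n ih => exact ih (correct_stepLayer hC) (by omega)

noncomputable def toGNN (φ : GML p) : GNN p 1 :=
  .cons (inputLayer φ) (stepGNN φ φ.height)

theorem toGNN_sumReLU (φ : GML p) : (toGNN φ).SumReLU :=
  ⟨ReLUPair.layer_sumReLU _, stepGNN_sumReLU φ _⟩

theorem toGNN_run (φ : GML p) (G : LGraph p) (v : G.V) :
    (toGNN φ).run G G.embG v 0 = if φ.sat G v then 1 else 0 :=
  stepGNN_run _ (correct_inputLayer φ G) (by omega) v

end GMLToGNN

/-- For every GML formula `φ` there is a GNN `A`, using only Sum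
aggregation and ReLU-FFNN combination functions, with `cls_A = cls_φ`. -/
theorem gml_to_gnn (p : ℕ) (φ : GML p) :
    ∃ A : GNN p 1, A.SumReLU ∧
      ∀ (G : LGraph p) (v : G.V), (A.clsP G v ↔ φ.sat G v) := by
  refine ⟨GMLToGNN.toGNN φ, GMLToGNN.toGNN_sumReLU φ, fun G v => ?_⟩
  rw [GNN.clsP, GMLToGNN.toGNN_run]
  by_cases h : φ.sat G v <;> simp [h]
end

section
/- Let A be a (D,D')-GNN with D = |P|, let N > 0, and let X = {run_A(G, emb_G)(v) : G a graph of degree at most N, v a node of G} ⊆ R^{D'} be the set of all node embeddings A can produce on graphs of degree at most N. Then X is finite, and for each x ∈ X there is a GML formula φ_x such that for every pointed graph (G,v) of degree at most N: G,v ⊨ φ_x iff run_A(G,emb_G)(v) = x. In particular, for each GNN classifier cls_A there is a GML formula φ with cls_φ(G,v) = cls_A(G,v) for all pointed graphs (G,v) of degree at most N. -/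
open Classical

/-! Over graphs of degree at most `N`, every layer of a GNN sees at a node only its own
embedding and the multiset of its neighbours' embeddings. If the embeddings take finitely many
values, each defined by a GML formula, then so does this pair: the multiset is fixed by the
number of neighbours satisfying each of the finitely many formulas, a count at most `N` that
GML expresses with graded modalities. Induction over the layers, starting from the label
encoding, gives finitely many output values, each defined by a GML formula; a classifier is
then the disjunction of the formulas of its accepted values. -/

namespace GML

variable {p : ℕ}

def bigAnd : List (GML p) → GML p
  | [] => .top
  | φ :: L => .and φ (bigAnd L)

def or (φ ψ : GML p) : GML p := .not (.and (.not φ) (.not ψ))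

def bigOr : List (GML p) → GML p
  | [] => .not .top
  | φ :: L => or φ (bigOr L)

def exactly (k : ℕ) (φ : GML p) : GML p := .and (.dia k φ) (.not (.dia (k + 1) φ))

variable (G : LGraph p) (v : G.V)

@[simp]
theorem sat_bigAnd (L : List (GML p)) : (bigAnd L).sat G v ↔ ∀ ψ ∈ L, ψ.sat G v := by
  induction L with
  | nil => simp [bigAnd, sat]
  | cons φ L ih => simp [bigAnd, sat, ih]

@[simp]
theorem sat_bigOr (L : List (GML p)) : (bigOr L).sat G v ↔ ∃ ψ ∈ L, ψ.sat G v := by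
  induction L with
  | nil => simp [bigOr, sat]
  | cons φ L ih => simp only [bigOr, or, sat, ih, List.exists_mem_cons_iff, not_and_or, not_not]

@[simp]
theorem sat_exactly (k : ℕ) (φ : GML p) :
    (exactly k φ).sat G v ↔ Nat.card {u : G.V // G.adj v u ∧ φ.sat G u} = k := by
  simp only [exactly, sat]
  omega

end GML

namespace LGraph

variable {p : ℕ} (G : LGraph p)

theorem count_map_nbrFinset {α : Type} (f : G.V → α) (v : G.V) (x : α) :
    ((G.nbrFinset v).val.map f).count x = Nat.card {u : G.V // G.adj v u ∧ f u = x} := by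
  rw [Multiset.count_map, Nat.card_eq_fintype_card, Fintype.card_subtype, Finset.card,
    nbrFinset, Finset.filter_val, Multiset.filter_filter, Finset.filter_val]
  congr 1
  exact Multiset.filter_congr fun u _ => by rw [eq_comm]; exact and_comm

theorem card_nbrFinset_le {N : ℕ} (hG : G.degLe N) (v : G.V) : (G.nbrFinset v).card ≤ N := by
  simpa [nbrFinset, Nat.card_eq_fintype_card, Fintype.card_subtype] using hG v

end LGraph

theorem Multiset.le_nsmul_val_of_card_le {α : Type} {M : Multiset α} {S : Finset α} {N : ℕ}
    (hcard : Multiset.card M ≤ N) (hS : ∀ a ∈ M, a ∈ S) : M ≤ N • S.val := by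
  refine Multiset.le_iff_count.mpr fun a => ?_
  by_cases ha : a ∈ S
  · simpa [Multiset.count_nsmul, Multiset.count_eq_one_of_mem S.nodup ha]
      using (Multiset.count_le_card a M).trans hcard
  · simp [Multiset.count_eq_zero.mpr (mt (hS a) ha)]

theorem Multiset.eq_iff_forall_count_eq {α : Type} {M M' : Multiset α} {T : Finset α}
    (hM : ∀ a ∈ M, a ∈ T) (hM' : ∀ a ∈ M', a ∈ T) :
    M = M' ↔ ∀ a ∈ T, M.count a = M'.count a := by
  refine ⟨fun h _ _ => h ▸ rfl, fun h => Multiset.ext' fun a => ?_⟩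
  by_cases ha : a ∈ T
  · exact h a ha
  · rw [Multiset.count_eq_zero.mpr (mt (hM a) ha), Multiset.count_eq_zero.mpr (mt (hM' a) ha)]

structure GMLDefinable {p : ℕ} {α : Type} (N : ℕ) (F : (G : LGraph p) → G.V → α) : Prop where
  finite_range : {x | ∃ G : LGraph p, G.degLe N ∧ ∃ v : G.V, F G v = x}.Finite
  exists_formula : ∀ x, ∃ φ : GML p, ∀ G : LGraph p, G.degLe N → ∀ v : G.V,
    (φ.sat G v ↔ F G v = x)

namespace GMLDefinable

variable {p N : ℕ} {α β : Type} {F : (G : LGraph p) → G.V → α}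

theorem mem_range (hF : GMLDefinable N F) {G : LGraph p} (hG : G.degLe N) (v : G.V) :
    F G v ∈ hF.finite_range.toFinset :=
  hF.finite_range.mem_toFinset.mpr ⟨G, hG, v, rfl⟩

theorem exists_formula_iff (hF : GMLDefinable N F) (P : α → Prop) :
    ∃ φ : GML p, ∀ G : LGraph p, G.degLe N → ∀ v : G.V, (φ.sat G v ↔ P (F G v)) := by
  choose φ hφ using hF.exists_formula
  refine ⟨GML.bigOr ((hF.finite_range.toFinset.filter P).toList.map φ), fun G hG v => ?_⟩
  simp only [GML.sat_bigOr, List.mem_map, Finset.mem_toList, Finset.mem_filter]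
  constructor
  · rintro ⟨_, ⟨x, ⟨-, hx⟩, rfl⟩, hsat⟩
    rwa [(hφ x G hG v).mp hsat]
  · exact fun hP => ⟨_, ⟨F G v, ⟨hF.mem_range hG v, hP⟩, rfl⟩, (hφ _ G hG v).mpr rfl⟩

theorem comp (hF : GMLDefinable N F) (g : α → β) : GMLDefinable N (fun G v => g (F G v)) where
  finite_range := (hF.finite_range.image g).subset (by
    rintro _ ⟨G, hG, v, rfl⟩
    exact ⟨F G v, ⟨G, hG, v, rfl⟩, rfl⟩)
  exists_formula y := hF.exists_formula_iff (g · = y)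

theorem prod {F' : (G : LGraph p) → G.V → β} (hF : GMLDefinable N F) (hF' : GMLDefinable N F') :
    GMLDefinable N (fun G v => (F G v, F' G v)) where
  finite_range := (hF.finite_range.prod hF'.finite_range).subset (by
    rintro _ ⟨G, hG, v, rfl⟩
    exact ⟨⟨G, hG, v, rfl⟩, ⟨G, hG, v, rfl⟩⟩)
  exists_formula := by
    rintro ⟨x, x'⟩
    obtain ⟨φ, hφ⟩ := hF.exists_formula x
    obtain ⟨φ', hφ'⟩ := hF'.exists_formula x'
    exact ⟨.and φ φ', fun G hG v => by simp [GML.sat, hφ G hG v, hφ' G hG v]⟩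

theorem lab : GMLDefinable N (fun (G : LGraph p) => G.lab) where
  finite_range := Set.toFinite _
  exists_formula x := by
    refine ⟨GML.bigAnd ((List.finRange p).map
      fun i => if x i then .prop i else .not (.prop i)), fun G _ v => ?_⟩
    simp only [GML.sat_bigAnd, List.mem_map, List.mem_finRange, true_and,
      forall_exists_index, forall_apply_eq_imp_iff, funext_iff]
    refine forall_congr' fun i => ?_
    by_cases hx : x i <;> simp [hx, GML.sat]

theorem embG : GMLDefinable N (fun (G : LGraph p) => G.embG) :=
  (lab (N := N)).comp fun l i => if l i then (1 : ℝ) else 0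

theorem map_nbrFinset (hF : GMLDefinable N F) :
    GMLDefinable N (fun G v => (G.nbrFinset v).val.map (F G)) where
  finite_range := by
    refine (N • hF.finite_range.toFinset.val).powerset.toFinset.finite_toSet.subset ?_
    rintro _ ⟨G, hG, v, rfl⟩
    refine Multiset.mem_toFinset.mpr (Multiset.mem_powerset.mpr ?_)
    refine Multiset.le_nsmul_val_of_card_le ?_ ?_
    · simpa using G.card_nbrFinset_le hG v
    · intro a ha
      obtain ⟨u, -, rfl⟩ := Multiset.mem_map.mp ha
      exact hF.mem_range hG u
  exists_formula M := by
    choose φ hφ using hF.exists_formula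
    let T := hF.finite_range.toFinset ∪ M.toFinset
    refine ⟨GML.bigAnd (T.toList.map fun s => GML.exactly (M.count s) (φ s)), fun G hG v => ?_⟩
    have hcount (s : α) : Nat.card {u : G.V // G.adj v u ∧ (φ s).sat G u} =
        ((G.nbrFinset v).val.map (F G)).count s := by
      rw [G.count_map_nbrFinset]
      exact Nat.card_congr (Equiv.subtypeEquivRight fun u => and_congr_right fun _ => hφ s G hG u)
    rw [Multiset.eq_iff_forall_count_eq (T := T)]
    · simp only [GML.sat_bigAnd, List.forall_mem_map, Finset.mem_toList, GML.sat_exactly, hcount]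
    · intro a ha
      obtain ⟨u, -, rfl⟩ := Multiset.mem_map.mp ha
      exact Finset.mem_union_left _ (hF.mem_range hG u)
    · exact fun a ha => Finset.mem_union_right _ (Multiset.mem_toFinset.mpr ha)

theorem layer_apply {D D' : ℕ} {F : (G : LGraph p) → G.V → Fin D → ℝ} (l : GNNLayer D D')
    (hF : GMLDefinable N F) : GMLDefinable N (fun G => l.apply G (F G)) :=
  (hF.prod hF.map_nbrFinset).comp fun q => l.com (Fin.append q.1 (l.agg q.2))

theorem gnn_run {D D' : ℕ} (A : GNN D D') {F : (G : LGraph p) → G.V → Fin D → ℝ}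
    (hF : GMLDefinable N F) : GMLDefinable N (fun G => A.run G (F G)) := by
  induction A with
  | last l => exact hF.layer_apply l
  | cons l rest ih => exact ih (hF.layer_apply l)

end GMLDefinable

theorem gnn_to_gml_general (p D' : ℕ) (A : GNN p D') (N : ℕ) :
    ({x : Fin D' → ℝ | ∃ G : LGraph p, G.degLe N ∧ ∃ v : G.V, A.run G G.embG v = x}).Finite ∧
    (∀ x : Fin D' → ℝ,
      (∃ G : LGraph p, G.degLe N ∧ ∃ v : G.V, A.run G G.embG v = x) →
      ∃ φ : GML p, ∀ (G : LGraph p), G.degLe N → ∀ v : G.V,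
        (φ.sat G v ↔ A.run G G.embG v = x)) ∧
    (∀ B : GNN p 1, ∃ φ : GML p, ∀ (G : LGraph p), G.degLe N → ∀ v : G.V,
      (φ.sat G v ↔ B.clsP G v)) := by
  have hA : GMLDefinable N (fun G => A.run G G.embG) := GMLDefinable.embG.gnn_run A
  refine ⟨hA.finite_range, fun x _ => hA.exists_formula x, fun B => ?_⟩
  exact (GMLDefinable.embG.gnn_run B).exists_formula_iff (fun y => 0 < y 0)

/-- Over graphs of degree at most `N`, a GNN produces only
finitely many node embeddings, each definable by a GML formula; in particular
every GNN node classifier is equivalent, over degree-`≤ N` graphs, to a GML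
formula. -/
theorem gnn_to_gml (p D' : ℕ) (A : GNN p D') (N : ℕ) (hN : 0 < N) :
    ({x : Fin D' → ℝ | ∃ G : LGraph p, G.degLe N ∧ ∃ v : G.V, A.run G G.embG v = x}).Finite ∧
    (∀ x : Fin D' → ℝ,
      (∃ G : LGraph p, G.degLe N ∧ ∃ v : G.V, A.run G G.embG v = x) →
      ∃ φ : GML p, ∀ (G : LGraph p), G.degLe N → ∀ v : G.V,
        (φ.sat G v ↔ A.run G G.embG v = x)) ∧
    (∀ B : GNN p 1, ∃ φ : GML p, ∀ (G : LGraph p), G.degLe N → ∀ v : G.V,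
      (φ.sat G v ↔ B.clsP G v)) :=
  gnn_to_gml_general p D' A N
end
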